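/- arXiv:1701.05990 — 3 statements merged into one kernel-verified Lean document; each statement's English description precedes it below -/
import Mathlib

section
/- Let K be a field of characteristic zero and A a unital K-algebra such that every K-subalgebra of A generated by finitely many elements is finite dimensional over K. If D is a locally nilpotent K-derivation of A, then for every K-subspace V of A, the image D(V) is a Mathieu subspace of A. -/
/-!
If every power `a ^ m` (`m ≥ 1`) lies in `D(V) ⊆ D(A)`, then `a` is nilpotent, and the Mathieu
condition holds trivially. Finitely many powers of `a` span all of them, because they lie in the
finite-dimensional algebra `K[a]`. Adjoining to `a` some `D`-preimages of these powers and all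
their (finite, by local nilpotency) `D`-orbits gives a finite-dimensional `D`-stable subalgebra
`C`. On `C`, left multiplication by `D y` is the commutator of `D` and left multiplication by
`y`, so every power of left multiplication by `a` has trace zero; in characteristic zero this
forces it to be nilpotent.
-/

def IsMathieuSubspace {K : Type*} [Field K] {A : Type*} [Ring A] [Algebra K A]
    (V : Submodule K A) : Prop :=
  ∀ a b c : A, (∀ m : ℕ, 1 ≤ m → a ^ m ∈ V) →
    ∃ N : ℕ, 1 ≤ N ∧ ∀ m : ℕ, N ≤ m → b * a ^ m * c ∈ V

open Polynomial Module LinearMap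

section TraceCriterion

variable {K W : Type*} [Field K] [AddCommGroup W] [Module K W]

lemma trace_aeval_eq_zero_of_trace_pow_eq_zero {T : End K W}
    (hT : ∀ m : ℕ, 1 ≤ m → trace K W (T ^ m) = 0) {f : K[X]} (hf : f.coeff 0 = 0) :
    trace K W (aeval T f) = 0 := by
  rw [aeval_eq_sum_range, map_sum]
  refine Finset.sum_eq_zero fun i _ => ?_
  rcases i.eq_zero_or_pos with rfl | hi
  · rw [hf, zero_smul, map_zero]
  · rw [map_smul, hT i hi, smul_zero]

variable [FiniteDimensional K W] [CharZero K]

theorem isNilpotent_of_trace_pow_eq_zero {T : End K W}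
    (hT : ∀ m : ℕ, 1 ≤ m → trace K W (T ^ m) = 0) : IsNilpotent T := by
  obtain ⟨r, hpr, hXr⟩ := exists_eq_pow_rootMultiplicity_mul_and_not_dvd (minpoly K T)
    (minpoly.ne_zero (Algebra.IsIntegral.isIntegral (R := K) T)) 0
  set k := (minpoly K T).rootMultiplicity 0
  rw [map_zero, sub_zero] at hpr hXr
  obtain ⟨u, v, huv⟩ := ((irreducible_X.coprime_iff_not_dvd).mpr hXr).pow_left (m := k + 1)
  -- `u X^(k+1)` evaluates to the projection onto `ker r(T)` along `ker T^(k+1)`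
  have hE : IsIdempotentElem (aeval T (u * X ^ (k + 1))) := by
    have hpoly : u * X ^ (k + 1) * (1 - u * X ^ (k + 1)) = u * v * X * minpoly K T := by
      rw [hpr, ← huv]; ring
    have h := congrArg (aeval T) hpoly
    rw [map_mul, map_sub, map_one, map_mul _ _ (minpoly K T), minpoly.aeval, mul_zero, mul_sub,
      mul_one, sub_eq_zero] at h
    exact h.symm
  have hE0 : aeval T (u * X ^ (k + 1)) = 0 :=
    LinearMap.IsIdempotentElem.eq_zero_of_trace_eq_zero hE
      (trace_aeval_eq_zero_of_trace_pow_eq_zero hT (by simp))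
  have hXk : (X ^ k : K[X]) = X ^ k * (u * X ^ (k + 1)) + v * minpoly K T := by
    rw [hpr]; linear_combination (-X ^ k : K[X]) * huv
  have h := congrArg (aeval T) hXk
  rw [map_add, map_mul, map_mul _ v, minpoly.aeval, mul_zero, add_zero, map_pow, aeval_X] at h
  exact ⟨k, h.trans (by rw [hE0, mul_zero])⟩

end TraceCriterion

lemma Module.End.exists_finset_superset_mapsTo {R M : Type*} [Semiring R] [AddCommMonoid M]
    [Module R M] [DecidableEq M] {f : End R M} (hf : ∀ x, ∃ n, (f ^ n) x = 0) (s : Finset M) :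
    ∃ t : Finset M, s ⊆ t ∧ Set.MapsTo f t t := by
  choose n hn using hf
  refine ⟨s.biUnion fun x => (Finset.range (n x + 1)).image fun i => (f ^ i) x, ?_, ?_⟩
  · intro x hx
    exact Finset.mem_biUnion.mpr ⟨x, hx, Finset.mem_image.mpr ⟨0, by simp, rfl⟩⟩
  · intro y hy
    obtain ⟨x, hx, hxy⟩ := Finset.mem_biUnion.mp (Finset.mem_coe.mp hy)
    obtain ⟨i, hi, rfl⟩ := Finset.mem_image.mp hxy
    rw [Finset.mem_range] at hi
    rw [← Module.End.mul_apply, ← pow_succ']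
    -- the orbit of `x` ends in `(f ^ n x) x = 0`, which is again in the orbit
    obtain hlt | rfl : i + 1 < n x + 1 ∨ i = n x := by omega
    · exact Finset.mem_biUnion.mpr
        ⟨x, hx, Finset.mem_image.mpr ⟨i + 1, Finset.mem_range.mpr hlt, rfl⟩⟩
    · refine Finset.mem_biUnion.mpr ⟨x, hx, Finset.mem_image.mpr ⟨n x, by simp, ?_⟩⟩
      rw [hn, Module.End.pow_map_zero_of_le (Nat.le_succ _) (hn x)]

section Leibniz

variable {R B : Type*} [CommRing R] [Ring B] [Algebra R B] {D : B →ₗ[R] B}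

lemma map_one_eq_zero_of_leibniz (hD : ∀ a b, D (a * b) = D a * b + a * D b) : D 1 = 0 := by
  simpa using hD 1 1

lemma adjoin_mapsTo_of_leibniz (hD : ∀ a b, D (a * b) = D a * b + a * D b) {s : Set B}
    (hs : Set.MapsTo D s (Algebra.adjoin R s)) :
    Set.MapsTo D (Algebra.adjoin R s) (Algebra.adjoin R s) := by
  intro x hx
  induction hx using Algebra.adjoin_induction with
  | mem y hy => exact hs hy
  | algebraMap r =>
    rw [Algebra.algebraMap_eq_smul_one, map_smul, map_one_eq_zero_of_leibniz hD, smul_zero]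
    exact zero_mem _
  | add y z _ _ hy hz => rw [map_add]; exact add_mem hy hz
  | mul y z hy' hz' hy hz => rw [hD]; exact add_mem (mul_mem hy hz') (mul_mem hy' hz)

lemma trace_mulLeft_eq_zero_of_leibniz (hD : ∀ a b, D (a * b) = D a * b + a * D b) (y : B) :
    trace R B (mulLeft R (D y)) = 0 := by
  have hcomm : mulLeft R (D y) = D * mulLeft R y - mulLeft R y * D := by
    ext x; simp [hD]
  rw [hcomm, map_sub, trace_mul_comm, sub_self]

end Leibniz

lemma isNilpotent_of_trace_mulLeft_pow_eq_zero {K B : Type*} [Field K] [CharZero K] [Ring B]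
    [Algebra K B] [FiniteDimensional K B] {b : B}
    (h : ∀ m : ℕ, 1 ≤ m → trace K B (mulLeft K (b ^ m)) = 0) : IsNilpotent b := by
  obtain ⟨k, hk⟩ := isNilpotent_of_trace_pow_eq_zero (T := mulLeft K b)
    fun m hm => by rw [pow_mulLeft]; exact h m hm
  refine ⟨k, ?_⟩
  simpa [pow_mulLeft] using congrArg (· (1 : B)) hk

section Algebra

variable {K A : Type*} [Field K] [CharZero K] [Ring A] [Algebra K A] {D : A →ₗ[K] A}

theorem Subalgebra.isNilpotent_of_pow_mem_map (hD : ∀ a b, D (a * b) = D a * b + a * D b)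
    (C : Subalgebra K A) [FiniteDimensional K C] (hCD : Set.MapsTo D C C) {a : A} (haC : a ∈ C)
    (ha : ∀ m : ℕ, 1 ≤ m → a ^ m ∈ (Subalgebra.toSubmodule C).map D) : IsNilpotent a := by
  let δ : C →ₗ[K] C :=
    D.restrict (p := Subalgebra.toSubmodule C) (q := Subalgebra.toSubmodule C) fun _ hx => hCD hx
  have hδ : ∀ x y, δ (x * y) = δ x * y + x * δ y := fun x y => Subtype.ext (hD x y)
  suffices IsNilpotent (⟨a, haC⟩ : C) from this.map C.val
  refine isNilpotent_of_trace_mulLeft_pow_eq_zero (K := K) fun m hm => ?_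
  obtain ⟨y, hyC, hy⟩ := ha m hm
  have : (⟨a, haC⟩ : C) ^ m = δ ⟨y, hyC⟩ := Subtype.ext hy.symm
  rw [this, trace_mulLeft_eq_zero_of_leibniz hδ]

theorem isNilpotent_of_forall_pow_mem_range
    (hKC : ∀ s : Finset A, FiniteDimensional K (Algebra.adjoin K (s : Set A)))
    (hD : ∀ a b, D (a * b) = D a * b + a * D b) (hLN : ∀ a, ∃ m, (D ^ m) a = 0) {a : A}
    (ha : ∀ m : ℕ, 1 ≤ m → a ^ m ∈ range D) : IsNilpotent a := by
  classical
  set P : Set A := {x | ∃ m, 1 ≤ m ∧ a ^ m = x}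
  have : FiniteDimensional K (Algebra.adjoin K {a}) := by
    have := hKC {a}
    rwa [Finset.coe_singleton] at this
  obtain ⟨s, hsP, hPs⟩ := (Submodule.fg_span_iff_fg_span_finset_subset P).mp <|
    Submodule.FG.of_le_of_isNoetherian (T := Subalgebra.toSubmodule (Algebra.adjoin K {a})) <|
      Submodule.span_le.mpr fun _ ⟨m, _, hm⟩ =>
        hm ▸ pow_mem (Algebra.self_mem_adjoin_singleton K a) m
  have hsD : ∀ x ∈ s, ∃ y, D y = x := fun x hx =>
    have ⟨m, hm, hmx⟩ := hsP hx
    hmx ▸ ha m hm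
  choose! w hw using hsD
  obtain ⟨t, hst, htD⟩ := Module.End.exists_finset_superset_mapsTo hLN (insert a (s.image w))
  set C := Algebra.adjoin K (t : Set A)
  have : FiniteDimensional K C := hKC t
  have htC : ∀ x ∈ insert a (s.image w), x ∈ C := fun x hx => Algebra.subset_adjoin (hst hx)
  refine C.isNilpotent_of_pow_mem_map hD
    (adjoin_mapsTo_of_leibniz hD (htD.mono_right Algebra.subset_adjoin))
    (htC a (Finset.mem_insert_self a _)) fun m hm => ?_
  have hsC : Submodule.span K (s : Set A) ≤ (Subalgebra.toSubmodule C).map D :=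
    Submodule.span_le.mpr fun x hx =>
      ⟨w x, htC _ (Finset.mem_insert_of_mem (Finset.mem_image_of_mem w hx)), hw x hx⟩
  exact hsC (hPs ▸ Submodule.subset_span ⟨m, hm, rfl⟩)

end Algebra

lemma isMathieuSubspace_of_isNilpotent {K A : Type*} [Field K] [Ring A] [Algebra K A]
    {V : Submodule K A} (h : ∀ a : A, (∀ m : ℕ, 1 ≤ m → a ^ m ∈ V) → IsNilpotent a) :
    IsMathieuSubspace V := by
  intro a b c ha
  obtain ⟨k, hk⟩ := h a ha
  refine ⟨k + 1, by omega, fun m hm => ?_⟩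
  rw [pow_eq_zero_of_le (by omega) hk, mul_zero, zero_mul]
  exact zero_mem V

/-- If D is a locally nilpotent K-derivation of A (with A satisfying (KC)),
then for every K-subspace V of A, the image D(V) is a Mathieu subspace of A. -/
theorem lned_derivation
    (K : Type*) [Field K] [CharZero K]
    (A : Type*) [Ring A] [Algebra K A]
    (hKC : ∀ s : Finset A, FiniteDimensional K (Algebra.adjoin K (s : Set A)))
    (D : A →ₗ[K] A)
    (hDer : ∀ a b : A, D (a * b) = D a * b + a * D b)
    (hLN : ∀ a : A, ∃ m : ℕ, 1 ≤ m ∧ (D ^ m) a = 0)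
    (V : Submodule K A) :
    IsMathieuSubspace (Submodule.map D V) :=
  isMathieuSubspace_of_isNilpotent fun _ ha =>
    isNilpotent_of_forall_pow_mem_range hKC hDer (fun x => (hLN x).imp fun _ => And.right)
      fun m hm => LinearMap.map_le_range (ha m hm)
end

section
/- Let K be a field of characteristic zero and A a unital K-algebra such that every K-subalgebra of A generated by finitely many elements is finite dimensional over K. Let φ be a locally finite K-algebra endomorphism of A such that the induced endomorphism of A / ⋃_{i≥1} Ker(φ^i) is surjective (i.e., for every a ∈ A there exist b ∈ A and k ≥ 1 with φ^k(a − φ(b)) = 0). Then for every idempotent e ∈ A, one has e ∈ (I − φ)(A) if and only if e ∈ ⋃_{i≥1} Ker(φ^i). -/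
/-!
If `e = x - φ x`, the orbit of `x` generates a finite-dimensional `φ`-stable subalgebra `B`.
On the stable image `C = φᴺ(B)` the map `φ` is an automorphism, so left multiplication by
`φ y` is conjugate to left multiplication by `y`; hence `e' = φᴺ e = y - φ y` has left
multiplication of trace zero. Left multiplication by an idempotent is a projection, whose
trace is its rank, so in characteristic zero `e' = 0`. Conversely, if `φᵏ e = 0` then
`e = x - φ x` for the telescoping sum `x = ∑_{i<k} φⁱ e`.
-/

open LinearMap

theorem exists_eq_sub_map_of_iterate_eq_zero {M : Type*} [AddCommGroup M] (f : M →+ M)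
    {a : M} {k : ℕ} (hk : f^[k] a = 0) : ∃ x, a = x - f x := by
  refine ⟨∑ i ∈ Finset.range k, f^[i] a, ?_⟩
  rw [map_sum, ← Finset.sum_sub_distrib]
  simp only [← Function.iterate_succ_apply' f]
  rw [Finset.sum_range_sub' (fun i => f^[i] a), hk, sub_zero, Function.iterate_zero_apply]

theorem AlgEquiv.trace_mulLeft_apply {R C D : Type*} [CommRing R] [Ring C] [Ring D]
    [Algebra R C] [Algebra R D] (f : C ≃ₐ[R] D) (y : C) :
    trace R D (mulLeft R (f y)) = trace R C (mulLeft R y) := by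
  have hconj : mulLeft R (f y) = f.toLinearEquiv.conj (mulLeft R y) := by
    ext d
    simp [LinearEquiv.conj_apply]
  rw [hconj, trace_conj']

theorem IsIdempotentElem.eq_zero_of_trace_mulLeft_eq_zero {K C : Type*} [Field K] [CharZero K]
    [Ring C] [Algebra K C] [FiniteDimensional K C] {e : C} (he : IsIdempotentElem e)
    (htr : trace K C (mulLeft K e) = 0) : e = 0 := by
  have hL : IsIdempotentElem (mulLeft K e : C →ₗ[K] C) := by
    rw [IsIdempotentElem, Module.End.mul_eq_comp, ← mulLeft_mul, he.eq]
  have h0 := hL.eq_zero_of_trace_eq_zero htr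
  simpa using congr($h0 1)

namespace AlgHom

variable {R A : Type*} [CommSemiring R] [Semiring A] [Algebra R A] (f : A →ₐ[R] A)
  {S : Subalgebra R A} (hS : ∀ a ∈ S, f a ∈ S)

def restrict : S →ₐ[R] S :=
  (f.comp S.val).codRestrict S fun a => hS a a.2

@[simp]
theorem coe_restrict_apply (a : S) : (f.restrict hS a : A) = f a :=
  rfl

theorem coe_restrict_iterate (n : ℕ) (a : S) : ((f.restrict hS)^[n] a : A) = f^[n] a :=
  Function.Semiconj.iterate_right (f := Subtype.val) (fun _ => rfl) n a

end AlgHom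

theorem IsIdempotentElem.eq_zero_of_eq_sub_map_of_surjective {K C : Type*} [Field K] [CharZero K]
    [Ring C] [Algebra K C] [FiniteDimensional K C] {e y : C} (he : IsIdempotentElem e)
    {ψ : C →ₐ[K] C} (hψ : Function.Surjective ψ) (hey : e = y - ψ y) :
    e = 0 := by
  let g : C ≃ₐ[K] C :=
    AlgEquiv.ofBijective ψ ⟨(injective_iff_surjective (f := ψ.toLinearMap)).mpr hψ, hψ⟩
  refine he.eq_zero_of_trace_mulLeft_eq_zero (K := K) ?_
  have hsub : mulLeft K (y - ψ y) = mulLeft K y - mulLeft K (ψ y) := by ext; simp [sub_mul]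
  rw [hey, hsub, map_sub, show ψ y = g y from rfl, g.trace_mulLeft_apply, sub_self]

theorem Module.End.exists_range_pow_succ_eq {R M : Type*} [Semiring R] [AddCommMonoid M]
    [Module R M] [IsArtinian R M] (f : Module.End R M) :
    ∃ n, range (f ^ (n + 1)) = range (f ^ n) := by
  obtain ⟨n, hn⟩ := IsArtinian.monotone_stabilizes f.iterateRange
  exact ⟨n, (hn (n + 1) n.le_succ).symm⟩

theorem AlgHom.exists_iterate_eq_zero_of_eq_sub_map {K B : Type*} [Field K] [CharZero K]
    [Ring B] [Algebra K B] [FiniteDimensional K B] (ψ : B →ₐ[K] B) {e y : B}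
    (he : IsIdempotentElem e) (hey : e = y - ψ y) : ∃ n, ψ^[n] e = 0 := by
  obtain ⟨n, hn⟩ := Module.End.exists_range_pow_succ_eq ψ.toLinearMap
  have hsucc (b : B) : ψ^[n + 1] b = ψ (ψ^[n] b) := Function.iterate_succ_apply' ψ n b
  let C := (ψ ^ n).range
  have hC : ∀ c ∈ C, ψ c ∈ C := by
    intro c hc
    obtain ⟨b, rfl⟩ := (ψ ^ n).mem_range.mp hc
    refine (ψ ^ n).mem_range.mpr ⟨ψ b, ?_⟩
    rw [AlgHom.coe_pow, ← hsucc, Function.iterate_succ_apply]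
  have hsurj : Function.Surjective (ψ.restrict hC) := by
    rintro ⟨c, hc⟩
    obtain ⟨b, rfl⟩ := (ψ ^ n).mem_range.mp hc
    have hb : (ψ ^ n) b ∈ range (ψ.toLinearMap ^ (n + 1)) :=
      hn ▸ ⟨b, by rw [Module.End.coe_pow, AlgHom.coe_pow]; rfl⟩
    obtain ⟨b', hb'⟩ := hb
    refine ⟨⟨(ψ ^ n) b', b', rfl⟩, Subtype.ext ?_⟩
    simpa [Module.End.coe_pow, hsucc] using hb'
  have he' : IsIdempotentElem (⟨ψ^[n] e, e, by simp⟩ : C) :=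
    Subtype.ext (by simpa [AlgHom.coe_pow] using (he.map (ψ ^ n)).eq)
  have hzero := he'.eq_zero_of_eq_sub_map_of_surjective hsurj (y := ⟨ψ^[n] y, y, by simp⟩)
    (Subtype.ext (by simp [hey, ← hsucc, Function.iterate_succ_apply]))
  exact ⟨n, congr($hzero.1)⟩

theorem finiteDimensional_adjoin_of_finiteDimensional_span {K A : Type*} [Field K] [Ring A]
    [Algebra K A] (hKC : ∀ s : Finset A, FiniteDimensional K (Algebra.adjoin K (s : Set A)))
    {T : Set A} (hT : FiniteDimensional K (Submodule.span K T)) :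
    FiniteDimensional K (Algebra.adjoin K T) := by
  obtain ⟨s, hs⟩ := (Submodule.fg_iff_finiteDimensional _).mpr hT
  rw [← Algebra.adjoin_span, ← hs, Algebra.adjoin_span]
  exact hKC s

theorem AlgHom.apply_mem_adjoin_range_iterate {R A : Type*} [CommSemiring R] [Semiring A]
    [Algebra R A] (f : A →ₐ[R] A) (x : A) :
    ∀ a ∈ Algebra.adjoin R (Set.range fun i : ℕ => f^[i] x),
      f a ∈ Algebra.adjoin R (Set.range fun i : ℕ => f^[i] x) := by
  have hle : (Algebra.adjoin R (Set.range fun i : ℕ => f^[i] x)).map f ≤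
      Algebra.adjoin R (Set.range fun i : ℕ => f^[i] x) := by
    rw [AlgHom.map_adjoin]
    apply Algebra.adjoin_mono
    rintro _ ⟨_, ⟨i, rfl⟩, rfl⟩
    exact ⟨i + 1, Function.iterate_succ_apply' f i x⟩
  exact fun a ha => hle ⟨a, ha, rfl⟩

theorem idempotent_in_image_iff_in_ker_pow_general
    (K : Type*) [Field K] [CharZero K]
    (A : Type*) [Ring A] [Algebra K A]
    (hKC : ∀ s : Finset A, FiniteDimensional K (Algebra.adjoin K (s : Set A)))
    (φ : A →ₐ[K] A)
    (hLF : ∀ a : A,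
      FiniteDimensional K (Submodule.span K (Set.range fun i : ℕ => (⇑φ)^[i] a)))
    (e : A) (he : e * e = e) :
    (∃ x : A, e = x - φ x) ↔ (∃ k : ℕ, 1 ≤ k ∧ (⇑φ)^[k] e = 0) := by
  constructor
  · rintro ⟨x, rfl⟩
    let B := Algebra.adjoin K (Set.range fun i : ℕ => (⇑φ)^[i] x)
    have : FiniteDimensional K B := finiteDimensional_adjoin_of_finiteDimensional_span hKC (hLF x)
    have hφB := φ.apply_mem_adjoin_range_iterate x
    have hxB : x ∈ B := Algebra.subset_adjoin ⟨0, rfl⟩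
    have heB : x - φ x ∈ B := sub_mem hxB (hφB x hxB)
    obtain ⟨n, hn⟩ := (φ.restrict hφB).exists_iterate_eq_zero_of_eq_sub_map
      (e := ⟨x - φ x, heB⟩) (y := ⟨x, hxB⟩) (Subtype.ext he) rfl
    refine ⟨n + 1, Nat.le_add_left 1 n, ?_⟩
    rw [Function.iterate_succ_apply', ← φ.coe_restrict_iterate hφB n ⟨_, heB⟩, hn,
      ZeroMemClass.coe_zero, map_zero]
  · rintro ⟨k, -, hk⟩
    exact exists_eq_sub_map_of_iterate_eq_zero φ.toAddMonoidHom hk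

/-- Let K be a field of characteristic zero and A a unital K-algebra
satisfying (KC). Let φ be a locally finite K-algebra endomorphism of A such that the
induced endomorphism of A / ⋃_{i≥1} Ker(φ^i) is surjective. Then an idempotent e of A
lies in (I − φ)(A) if and only if e ∈ ⋃_{i≥1} Ker(φ^i). -/
theorem idempotent_in_image_iff_in_ker_pow
    (K : Type*) [Field K] [CharZero K]
    (A : Type*) [Ring A] [Algebra K A]
    (hKC : ∀ s : Finset A, FiniteDimensional K (Algebra.adjoin K (s : Set A)))
    (φ : A →ₐ[K] A)
    (hLF : ∀ a : A,
      FiniteDimensional K (Submodule.span K (Set.range fun i : ℕ => (⇑φ)^[i] a)))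
    (hsurj : ∀ a : A, ∃ b : A, ∃ k : ℕ, 1 ≤ k ∧ (⇑φ)^[k] (a - φ b) = 0)
    (e : A) (he : e * e = e) :
    (∃ x : A, e = x - φ x) ↔ (∃ k : ℕ, 1 ≤ k ∧ (⇑φ)^[k] e = 0) :=
  idempotent_in_image_iff_in_ker_pow_general K A hKC φ hLF e he
end

section
/- Let K be a field of characteristic zero and A a unital K-algebra such that every K-subalgebra of A generated by finitely many elements is finite dimensional over K. If φ is a K-algebra automorphism of A of finite order (i.e., φ^n = I for some n ≥ 1), then for every K-subspace V of A, the image (I − φ)(V) is a Mathieu subspace of A. -/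
/-!
If `a ^ m = v - φ v` for every `m ≥ 1` and `φ ^ n = 1`, the sum of `a ^ m` over the `φ`-orbit
telescopes to `0`. The `φ`-orbit of `a` generates a finite-dimensional `φ`-stable subalgebra `B`,
and `x ↦ tr (L_x)`, the trace of left multiplication on `B`, is invariant under automorphisms of
`B`; hence `n • tr (L_a ^ m) = 0`. In characteristic zero an endomorphism all of whose powers
have trace zero is nilpotent, so `L_a`, and with it `a`, is nilpotent, and `b * a ^ m * c = 0`
for large `m`.
-/

open Polynomial

theorem LinearMap.trace_aeval_eq_zero_of_trace_pow_eq_zero {R M : Type*} [CommRing R]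
    [AddCommGroup M] [Module R M] {f : Module.End R M}
    (h : ∀ m, 1 ≤ m → LinearMap.trace R M (f ^ m) = 0) {p : R[X]} (hp : p.coeff 0 = 0) :
    LinearMap.trace R M (aeval f p) = 0 := by
  rw [aeval_eq_sum_range, map_sum]
  refine Finset.sum_eq_zero fun i _ => ?_
  rcases Nat.eq_zero_or_pos i with rfl | hi
  · simp [hp]
  · rw [map_smul, h i hi, smul_zero]

theorem LinearMap.isNilpotent_of_trace_pow_eq_zero {K V : Type*} [Field K] [CharZero K]
    [AddCommGroup V] [Module K V] [FiniteDimensional K V] {f : Module.End K V}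
    (h : ∀ m, 1 ≤ m → LinearMap.trace K V (f ^ m) = 0) : IsNilpotent f := by
  have hμ : minpoly K f ≠ 0 := minpoly.ne_zero (Algebra.IsIntegral.isIntegral f)
  obtain ⟨q, hμq, hq⟩ := exists_eq_pow_rootMultiplicity_mul_and_not_dvd _ hμ 0
  set k := (minpoly K f).rootMultiplicity 0
  rw [map_zero, sub_zero] at hμq hq
  obtain ⟨a, b, hab⟩ : IsCoprime (X ^ (k + 1)) q :=
    ((irreducible_X.coprime_iff_not_dvd).2 hq).pow_left
  set p := a * X ^ (k + 1)
  -- `aeval f p` is the idempotent projecting onto the part of `V` on which `f` is invertible.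
  have hp : IsIdempotentElem (aeval f p) := by
    have : p * p = p - a * b * X * minpoly K f := by rw [hμq]; linear_combination p * hab
    rw [IsIdempotentElem, ← map_mul, this, map_sub, map_mul _ _ (minpoly K f), minpoly.aeval,
      mul_zero, sub_zero]
  have hp0 : aeval f p = 0 := IsIdempotentElem.eq_zero_of_trace_eq_zero hp
    (trace_aeval_eq_zero_of_trace_pow_eq_zero h (by simp [p]))
  have hXk : X ^ k = X ^ k * p + b * minpoly K f := by rw [hμq]; linear_combination -X ^ k * hab
  refine ⟨k, ?_⟩
  rw [← aeval_X_pow (R := K), hXk, map_add, map_mul _ (X ^ k), map_mul _ b, hp0, minpoly.aeval,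
    mul_zero, mul_zero, add_zero]

theorem LinearMap.trace_lmul_algEquiv_apply {K B C : Type*} [Field K] [Ring B] [Ring C]
    [Algebra K B] [Algebra K C] (e : B ≃ₐ[K] C) (x : B) :
    LinearMap.trace K C (Algebra.lmul K C (e x)) = LinearMap.trace K B (Algebra.lmul K B x) := by
  have : Algebra.lmul K C (e x) = e.toLinearEquiv.conj (Algebra.lmul K B x) := by
    ext y; simp [LinearEquiv.conj_apply]
  rw [this, LinearMap.trace_conj']

theorem isNilpotent_of_sum_pow_algEquiv_apply_pow_eq_zero {K B : Type*} [Field K] [CharZero K]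
    [Ring B] [Algebra K B] [FiniteDimensional K B] (ψ : B ≃ₐ[K] B) {n : ℕ} (hn : n ≠ 0) {x : B}
    (h : ∀ m, 1 ≤ m → ∑ i ∈ Finset.range n, (ψ ^ i) (x ^ m) = 0) : IsNilpotent x := by
  rw [← IsNilpotent.map_iff (Algebra.lmul_injective (R := K))]
  refine LinearMap.isNilpotent_of_trace_pow_eq_zero fun m hm => ?_
  have := congrArg (fun y => LinearMap.trace K B (Algebra.lmul K B y)) (h m hm)
  simp only [map_sum, LinearMap.trace_lmul_algEquiv_apply, Finset.sum_const, Finset.card_range,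
    nsmul_eq_mul, map_zero] at this
  rw [← map_pow]
  exact (mul_eq_zero.1 this).resolve_left (Nat.cast_ne_zero.2 hn)

theorem Finset.sum_range_pow_smul_sub_smul_eq_zero {G M : Type*} [Monoid G] [AddCommGroup M]
    [DistribMulAction G M] {g : G} {n : ℕ} (hg : g ^ n = 1) (v : M) :
    ∑ i ∈ Finset.range n, g ^ i • (v - g • v) = 0 := by
  simp_rw [smul_sub, smul_smul, ← pow_succ]
  rw [Finset.sum_range_sub', pow_zero, hg, sub_self]

namespace AlgEquiv

variable {R A : Type*} [CommSemiring R] [Semiring A] [Algebra R A]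

def restrictSubalgebra (φ : A ≃ₐ[R] A) (B : Subalgebra R A)
    (h : B.map (φ : A →ₐ[R] A) = B) : B ≃ₐ[R] B :=
  (φ.subalgebraMap B).trans (Subalgebra.equivOfEq _ _ h)

theorem coe_restrictSubalgebra_pow_apply (φ : A ≃ₐ[R] A) {B : Subalgebra R A}
    (h : B.map (φ : A →ₐ[R] A) = B) (i : ℕ) (x : B) :
    ((φ.restrictSubalgebra B h ^ i) x : A) = (φ ^ i) x := by
  induction i with
  | zero => rfl
  | succ i ih => rw [pow_succ', pow_succ', mul_apply, mul_apply, ← ih]; rfl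

end AlgEquiv

theorem exists_finiteDimensional_subalgebra_mem_map_eq {K A : Type*} [Field K] [Ring A]
    [Algebra K A] (hKC : ∀ s : Finset A, FiniteDimensional K (Algebra.adjoin K (s : Set A)))
    {φ : A ≃ₐ[K] A} (hφ : IsOfFinOrder φ) (a : A) :
    ∃ B : Subalgebra K A, FiniteDimensional K B ∧ a ∈ B ∧ B.map (φ : A →ₐ[K] A) = B := by
  set S := MulAction.orbit (Subgroup.zpowers φ) a
  have hS : S.Finite := by
    have := hφ.finite_zpowers.to_subtype
    exact Set.finite_range _
  have hφS : (φ : A →ₐ[K] A) '' S = S :=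
    Set.image_smul.trans <|
      MulAction.smul_orbit (⟨φ, Subgroup.mem_zpowers φ⟩ : Subgroup.zpowers φ) a
  refine ⟨Algebra.adjoin K S, hS.coe_toFinset ▸ hKC hS.toFinset, ?_, ?_⟩
  · exact Algebra.subset_adjoin (MulAction.mem_orbit_self a)
  · rw [AlgHom.map_adjoin, hφS]

theorem IsMathieuSubspace.of_isNilpotent {K A : Type*} [Field K] [Ring A] [Algebra K A]
    {V : Submodule K A} (h : ∀ a : A, (∀ m, 1 ≤ m → a ^ m ∈ V) → IsNilpotent a) :
    IsMathieuSubspace V := by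
  intro a b c ha
  obtain ⟨k, hk⟩ := h a ha
  refine ⟨k + 1, Nat.le_add_left 1 k, fun m hm => ?_⟩
  rw [pow_eq_zero_of_le (by omega) hk, mul_zero, zero_mul]
  exact V.zero_mem

/-- Let K be a field of characteristic zero and A a unital K-algebra
satisfying (KC). If φ is a K-algebra automorphism of A of finite order, then for every
K-subspace V of A, the image (I − φ)(V) is a Mathieu subspace of A. -/
theorem finite_order_automorphism_maps_subspaces_to_MS
    (K : Type*) [Field K] [CharZero K]
    (A : Type*) [Ring A] [Algebra K A]
    (hKC : ∀ s : Finset A, FiniteDimensional K (Algebra.adjoin K (s : Set A)))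
    (φ : A ≃ₐ[K] A) (hfin : ∃ n : ℕ, 1 ≤ n ∧ φ ^ n = 1)
    (V : Submodule K A) :
    IsMathieuSubspace
      (Submodule.map (LinearMap.id - φ.toLinearMap : A →ₗ[K] A) V) := by
  obtain ⟨n, hn, hφn⟩ := hfin
  refine IsMathieuSubspace.of_isNilpotent fun a ha => ?_
  have hφ : IsOfFinOrder φ := isOfFinOrder_iff_pow_eq_one.2 ⟨n, hn, hφn⟩
  obtain ⟨B, _, haB, hφB⟩ := exists_finiteDimensional_subalgebra_mem_map_eq hKC hφ a
  suffices IsNilpotent (⟨a, haB⟩ : B) from this.map B.val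
  refine isNilpotent_of_sum_pow_algEquiv_apply_pow_eq_zero (φ.restrictSubalgebra B hφB)
    (Nat.one_le_iff_ne_zero.1 hn) fun m hm => Subtype.ext ?_
  obtain ⟨v, -, hv⟩ := ha m hm
  simp only [AddSubmonoidClass.coe_finsetSum, AlgEquiv.coe_restrictSubalgebra_pow_apply,
    SubmonoidClass.coe_pow, ← hv, ZeroMemClass.coe_zero, LinearMap.sub_apply, LinearMap.id_apply,
    AlgEquiv.toLinearMap_apply]
  simpa only [AlgEquiv.smul_def] using Finset.sum_range_pow_smul_sub_smul_eq_zero hφn v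
end
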